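/- For every prime ℓ and every positive integer β < (√3/2)ℓ that is primitively represented by the Eisenstein norm form x² − xy + y² (i.e., β = a² − ab + b² with gcd(a,b) = 1), there exists an index-ℓ sublattice M of ℤ[ω] whose minimal nonzero squared length equals β and whose minimal vectors form exactly one pair ±v. -/

import Mathlib

/-!
Take `v = a + bω` and let `M` consist of the `x + yω` with `ℓ ∣ ay − bx`. Since `a, b` are coprime,
`x + yω ↦ ay − bx mod ℓ` maps `ℤ[ω]` onto `ℤ/ℓ` with kernel `M`, so `M` has index `ℓ`. An element
`u ∈ M` with `ay − bx = 0` is an integer multiple `mv`, of norm `m²β`. Otherwise `|ay − bx| ≥ ℓ`,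
and the identity `4 N(u) N(v) = (2ax − ay − bx + 2by)² + 3 (ay − bx)²` gives
`4 N(u) β ≥ 3ℓ² > 4β²`, i.e. `N(u) > β`.
-/

/-- The primitive cube root of unity `ω = e^{2πi/3}`. -/
noncomputable def ω : ℂ := Complex.exp (2 * Real.pi * Complex.I / 3)

/-- The Eisenstein lattice `ℤ[ω] ⊂ ℂ`. -/
noncomputable def Eisenstein : AddSubgroup ℂ := AddSubgroup.closure {1, ω}

lemma four_mul_sq_lt_three_mul_sq {x y : ℝ} (hx : 0 ≤ x) (h : x < √3 / 2 * y) :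
    4 * x ^ 2 < 3 * y ^ 2 := by
  nlinarith [Real.sq_sqrt (show (0 : ℝ) ≤ 3 by norm_num)]

lemma ω_eq_exp : ω = Complex.exp (((Real.pi - Real.pi / 3 : ℝ) : ℂ) * Complex.I) := by
  rw [ω]
  congr 1
  push_cast
  ring

lemma ω_re : ω.re = -(1 / 2) := by
  rw [ω_eq_exp, Complex.exp_ofReal_mul_I_re, Real.cos_pi_sub, Real.cos_pi_div_three]

lemma ω_im : ω.im = √3 / 2 := by
  rw [ω_eq_exp, Complex.exp_ofReal_mul_I_im, Real.sin_pi_sub, Real.sin_pi_div_three]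

lemma norm_add_mul_ω_sq (x y : ℝ) : ‖(x : ℂ) + y * ω‖ ^ 2 = x ^ 2 - x * y + y ^ 2 := by
  rw [Complex.sq_norm, Complex.normSq_apply]
  simp only [Complex.add_re, Complex.add_im, Complex.mul_re, Complex.mul_im, Complex.ofReal_re,
    Complex.ofReal_im, ω_re, ω_im]
  ring_nf
  rw [Real.sq_sqrt (by norm_num)]
  ring

namespace Eisenstein

def normForm (p : ℤ × ℤ) : ℤ := p.1 ^ 2 - p.1 * p.2 + p.2 ^ 2

lemma normForm_pos {p : ℤ × ℤ} (hp : p ≠ 0) : 0 < normForm p := by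
  have h4 : 4 * normForm p = (2 * p.1 - p.2) ^ 2 + 3 * p.2 ^ 2 := by
    unfold normForm; ring
  by_cases hy : p.2 = 0
  · have hx : p.1 ≠ 0 := fun hx => hp (Prod.ext hx hy)
    simpa [normForm, hy] using pow_pos (abs_pos.mpr hx) 2
  · nlinarith [sq_nonneg (2 * p.1 - p.2), pow_pos (abs_pos.mpr hy) 2, sq_abs p.2]

lemma normForm_zsmul (m : ℤ) (p : ℤ × ℤ) : normForm (m • p) = m ^ 2 * normForm p := by
  simp only [normForm, Prod.smul_fst, Prod.smul_snd, smul_eq_mul]; ring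

noncomputable def coordHom : ℤ × ℤ →+ ℂ where
  toFun p := p.1 + p.2 * ω
  map_zero' := by simp
  map_add' p q := by simp only [Prod.fst_add, Prod.snd_add, Int.cast_add]; ring

lemma norm_coordHom_sq (p : ℤ × ℤ) : ‖coordHom p‖ ^ 2 = normForm p := by
  have h := norm_add_mul_ω_sq p.1 p.2
  push_cast at h
  simpa [coordHom, normForm] using h

lemma norm_coordHom_lt_norm_coordHom {p q : ℤ × ℤ} :
    ‖coordHom p‖ < ‖coordHom q‖ ↔ normForm p < normForm q := by
  rw [← sq_lt_sq₀ (norm_nonneg _) (norm_nonneg _), norm_coordHom_sq, norm_coordHom_sq]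
  exact Int.cast_lt

lemma coordHom_injective : Function.Injective coordHom := by
  refine (injective_iff_map_eq_zero coordHom).mpr fun p hp => ?_
  by_contra h
  have := norm_coordHom_sq p
  rw [hp, norm_zero] at this
  exact (normForm_pos h).ne' (by exact_mod_cast this.symm)

lemma eq_range_coordHom : Eisenstein = coordHom.range := by
  ext z
  rw [Eisenstein, AddSubgroup.mem_closure_pair, AddMonoidHom.mem_range]
  constructor
  · rintro ⟨m, n, rfl⟩
    exact ⟨(m, n), by simp [coordHom, zsmul_eq_mul]⟩
  · rintro ⟨p, rfl⟩
    exact ⟨p.1, p.2, by simp [coordHom, zsmul_eq_mul]⟩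

def detMod (ℓ : ℕ) (a b : ℤ) : ℤ × ℤ →+ ZMod ℓ where
  toFun p := ((a * p.2 - b * p.1 : ℤ) : ZMod ℓ)
  map_zero' := by simp
  map_add' p q := by simp only [Prod.fst_add, Prod.snd_add]; push_cast; ring

lemma mem_ker_detMod {ℓ : ℕ} {a b : ℤ} {p : ℤ × ℤ} :
    p ∈ (detMod ℓ a b).ker ↔ (ℓ : ℤ) ∣ a * p.2 - b * p.1 :=
  ZMod.intCast_zmod_eq_zero_iff_dvd _ ℓ

lemma detMod_surjective (ℓ : ℕ) {a b : ℤ} (hab : IsCoprime a b) :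
    Function.Surjective (detMod ℓ a b) := by
  obtain ⟨u, v, huv⟩ := hab
  intro t
  obtain ⟨n, rfl⟩ := ZMod.intCast_surjective t
  refine ⟨(-v * n, u * n), ?_⟩
  change ((a * (u * n) - b * (-v * n) : ℤ) : ZMod ℓ) = n
  congr 1
  linear_combination n * huv

lemma index_ker_detMod (ℓ : ℕ) {a b : ℤ} (hab : IsCoprime a b) :
    (detMod ℓ a b).ker.index = ℓ := by
  rw [AddSubgroup.index_ker, AddMonoidHom.range_eq_top.mpr (detMod_surjective ℓ hab),
    AddSubgroup.card_top, Nat.card_zmod]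

lemma prodMk_ne_zero_of_isCoprime {a b : ℤ} (hab : IsCoprime a b) : (a, b) ≠ 0 := fun h => by
  obtain ⟨rfl, rfl⟩ := Prod.mk_eq_zero.mp h
  exact not_isCoprime_zero_zero hab

lemma eq_zsmul_of_det_eq_zero {a b : ℤ} (hab : IsCoprime a b) {p : ℤ × ℤ}
    (h : a * p.2 - b * p.1 = 0) : ∃ m : ℤ, p = m • (a, b) := by
  obtain ⟨u, v, huv⟩ := hab
  refine ⟨u * p.1 + v * p.2, Prod.ext ?_ ?_⟩
  · change p.1 = (u * p.1 + v * p.2) * a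
    linear_combination -p.1 * huv - v * h
  · change p.2 = (u * p.1 + v * p.2) * b
    linear_combination -p.2 * huv + u * h

lemma normForm_lt_of_mem_ker_detMod {ℓ : ℕ} {a b : ℤ} (hab : IsCoprime a b)
    (hℓ : 4 * normForm (a, b) ^ 2 < 3 * ℓ ^ 2) {p : ℤ × ℤ} (hp : p ∈ (detMod ℓ a b).ker)
    (hp₀ : p ≠ 0) (hp₁ : p ≠ (a, b)) (hp₂ : p ≠ -(a, b)) : normForm (a, b) < normForm p := by
  have hβ : 0 < normForm (a, b) := normForm_pos (prodMk_ne_zero_of_isCoprime hab)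
  by_cases hdet : a * p.2 - b * p.1 = 0
  · obtain ⟨m, rfl⟩ := eq_zsmul_of_det_eq_zero hab hdet
    have hm : 4 ≤ m ^ 2 := by
      have h₀ : m ≠ 0 := by rintro rfl; exact hp₀ (zero_smul ℤ _)
      have h₁ : m ≠ 1 := by rintro rfl; exact hp₁ (one_smul ℤ _)
      have h₂ : m ≠ -1 := by rintro rfl; exact hp₂ (neg_one_smul ℤ _)
      rcases (by omega : 2 ≤ m ∨ m ≤ -2) with h | h <;> nlinarith
    rw [normForm_zsmul]
    nlinarith
  · have hℓdet : (ℓ : ℤ) ^ 2 ≤ (a * p.2 - b * p.1) ^ 2 := by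
      rw [← Int.natAbs_le_iff_sq_le]
      exact Int.natAbs_le_of_dvd_ne_zero (mem_ker_detMod.mp hp) hdet
    have key : 4 * normForm (a, b) * normForm p
        = (2 * a * p.1 - a * p.2 - b * p.1 + 2 * b * p.2) ^ 2 + 3 * (a * p.2 - b * p.1) ^ 2 := by
      unfold normForm; ring
    nlinarith [sq_nonneg (2 * a * p.1 - a * p.2 - b * p.1 + 2 * b * p.2)]

end Eisenstein

open Eisenstein

theorem exists_three_and_one_form_general (ℓ : ℕ)
    (β : ℕ) (hβlt : (β : ℝ) < (Real.sqrt 3 / 2) * ℓ)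
    (hrep : ∃ a b : ℤ, IsCoprime a b ∧ (β : ℤ) = a ^ 2 - a * b + b ^ 2) :
    ∃ M : AddSubgroup ℂ,
      M ≤ Eisenstein ∧ (M.addSubgroupOf Eisenstein).index = ℓ ∧
      ∃ v : ℂ, v ∈ M ∧ v ≠ 0 ∧ ‖v‖ ^ 2 = (β : ℝ) ∧
        ∀ u ∈ M, u ≠ 0 → u ≠ v → u ≠ -v → ‖v‖ < ‖u‖ := by
  obtain ⟨a, b, hab, hβ⟩ := hrep
  have hℓ : 4 * normForm (a, b) ^ 2 < 3 * (ℓ : ℤ) ^ 2 := by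
    rw [normForm, ← hβ]
    exact_mod_cast four_mul_sq_lt_three_mul_sq (Nat.cast_nonneg β) hβlt
  refine ⟨(detMod ℓ a b).ker.map coordHom, ?_, ?_, coordHom (a, b), ?_, ?_, ?_, ?_⟩
  · rw [eq_range_coordHom]
    exact AddSubgroup.map_le_range _ _
  · rw [eq_range_coordHom, AddMonoidHom.range_eq_map]
    change AddSubgroup.relIndex _ _ = _
    rw [AddSubgroup.relIndex_map_map_of_injective _ _ coordHom_injective,
      AddSubgroup.relIndex_top_right, index_ker_detMod ℓ hab]
  · refine AddSubgroup.mem_map_of_mem _ (mem_ker_detMod.mpr ?_)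
    rw [mul_comm, sub_self]
    exact dvd_zero _
  · exact (map_ne_zero_iff _ coordHom_injective).mpr (prodMk_ne_zero_of_isCoprime hab)
  · rw [norm_coordHom_sq, normForm, ← hβ, Int.cast_natCast]
  · rintro _ ⟨p, hp, rfl⟩ h₀ h₁ h₂
    rw [norm_coordHom_lt_norm_coordHom]
    refine normForm_lt_of_mem_ker_detMod hab hℓ hp ?_ (mt (congrArg coordHom) h₁) ?_
    · rintro rfl
      exact h₀ (map_zero _)
    · rintro rfl
      exact h₂ (map_neg _ _)

/-- For every prime `ℓ` and every positive integer `β < (√3/2)ℓ` that is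
primitively represented by the Eisenstein norm form `x² − xy + y²`, there is
an index-`ℓ` sublattice `M` of `ℤ[ω]` whose minimal nonzero squared length is
`β` and whose minimal vectors form exactly one pair `±v`. -/
theorem exists_three_and_one_form (ℓ : ℕ) (hℓ : ℓ.Prime)
    (β : ℕ) (hβpos : 0 < β) (hβlt : (β : ℝ) < (Real.sqrt 3 / 2) * ℓ)
    (hrep : ∃ a b : ℤ, IsCoprime a b ∧ (β : ℤ) = a ^ 2 - a * b + b ^ 2) :
    ∃ M : AddSubgroup ℂ,
      M ≤ Eisenstein ∧ (M.addSubgroupOf Eisenstein).index = ℓ ∧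
      ∃ v : ℂ, v ∈ M ∧ v ≠ 0 ∧ ‖v‖ ^ 2 = (β : ℝ) ∧
        ∀ u ∈ M, u ≠ 0 → u ≠ v → u ≠ -v → ‖v‖ < ‖u‖ :=
  exists_three_and_one_form_general ℓ β hβlt hrep
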